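/- Let (X,d) be a compact metric space and φ : X → X a continuous map. Then for every integer m ≥ 1 one has C(φ^m) = C(φ), C̲(φ^m) = C̲(φ), and C*(φ^m) = C*(φ), where φ^m is the m-th iterate of φ. -/

import Mathlib

open Filter Set Metric
open scoped ENNReal Topology

/-- The dynamical distance of order `n` associated with the map `φ`:
`d_n^φ(x,y) = max_{0 ≤ k ≤ n-1} d(φ^k x, φ^k y)`. -/
noncomputable def dynDist {X : Type*} [MetricSpace X] (φ : X → X) (n : ℕ) (x y : X) : ℝ :=
  ⨆ k : Fin n, dist (φ^[(k : ℕ)] x) (φ^[(k : ℕ)] y)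

/-- The open `(n,ε)`-ball centered at `x` for the dynamical distance `d_n^φ`. -/
def dynBall {X : Type*} [MetricSpace X] (φ : X → X) (n : ℕ) (x : X) (ε : ℝ) : Set X :=
  {y | dynDist φ n x y < ε}

/-- `G_n(Y,ε)`: the minimal number of `(n,ε)`-balls (centers anywhere in `X`)
needed to cover `Y`. -/
noncomputable def coverNum {X : Type*} [MetricSpace X] (φ : X → X) (n : ℕ) (Y : Set X)
    (ε : ℝ) : ℕ :=
  sInf {m : ℕ | ∃ t : Finset X, t.card = m ∧ Y ⊆ ⋃ x ∈ t, dynBall φ n x ε}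

/-- The (upper) complexity index `C(φ,Y) = sup_{ε>0} limsup_n log G_n(Y,ε) / log n`. -/
noncomputable def upperComplexity {X : Type*} [MetricSpace X] (φ : X → X) (Y : Set X) : ℝ≥0∞ :=
  ⨆ (ε : ℝ) (_ : 0 < ε),
    Filter.limsup
      (fun n : ℕ => ENNReal.ofReal (Real.log (coverNum φ n Y ε) / Real.log n)) Filter.atTop

/-- The lower complexity index `C̲(φ,Y) = sup_{ε>0} liminf_n log G_n(Y,ε) / log n`. -/
noncomputable def lowerComplexity {X : Type*} [MetricSpace X] (φ : X → X) (Y : Set X) : ℝ≥0∞ :=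
  ⨆ (ε : ℝ) (_ : 0 < ε),
    Filter.liminf
      (fun n : ℕ => ENNReal.ofReal (Real.log (coverNum φ n Y ε) / Real.log n)) Filter.atTop

/-- The weight `M(C,s) = Σ_i (1/n_i)^s` of a (countable) family of dynamical balls, the
family being encoded as a set of pairs `(center, order)`. -/
noncomputable def coverWeight {X : Type*} [MetricSpace X] (s : ℝ) (S : Set (X × ℕ)) : ℝ≥0∞ :=
  ∑' p : S, ((p : X × ℕ).2 : ℝ≥0∞)⁻¹ ^ s

/-- A covering of `Y` of order `≥ N` at scale `ε`: a countable family of `(n_i,ε)`-balls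
with all `n_i ≥ N` whose union contains `Y`. -/
def IsDynCover {X : Type*} [MetricSpace X] (φ : X → X) (Y : Set X) (ε : ℝ) (N : ℕ)
    (S : Set (X × ℕ)) : Prop :=
  S.Countable ∧ (∀ p ∈ S, N ≤ p.2) ∧ Y ⊆ ⋃ p ∈ S, dynBall φ p.2 p.1 ε

/-- `δ(Y,ε,s,N)`: the infimum of the weights of coverings of `Y` of order `≥ N`. -/
noncomputable def dynDelta {X : Type*} [MetricSpace X] (φ : X → X) (Y : Set X) (ε s : ℝ)
    (N : ℕ) : ℝ≥0∞ :=
  ⨅ (S : Set (X × ℕ)) (_ : IsDynCover φ Y ε N S), coverWeight s S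

/-- `Δ(Y,ε,s) = sup_{N ≥ 1} δ(Y,ε,s,N)`. -/
noncomputable def dynDeltaSup {X : Type*} [MetricSpace X] (φ : X → X) (Y : Set X)
    (ε s : ℝ) : ℝ≥0∞ :=
  ⨆ (N : ℕ) (_ : 1 ≤ N), dynDelta φ Y ε s N

/-- The critical value `s_c(Y,ε) = inf {s ≥ 0 | Δ(Y,ε,s) = 0}`, as an element of `[0,∞]`
(with `inf ∅ = +∞`). -/
noncomputable def critVal {X : Type*} [MetricSpace X] (φ : X → X) (Y : Set X) (ε : ℝ) : ℝ≥0∞ :=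
  sInf {c : ℝ≥0∞ | ∃ s : ℝ, 0 ≤ s ∧ c = ENNReal.ofReal s ∧ dynDeltaSup φ Y ε s = 0}

/-- The weak complexity index `C*(φ,Y) = sup_{ε>0} s_c(Y,ε)`. -/
noncomputable def weakComplexity {X : Type*} [MetricSpace X] (φ : X → X) (Y : Set X) : ℝ≥0∞ :=
  ⨆ (ε : ℝ) (_ : 0 < ε), critVal φ Y ε

/-!
Orbit segments of length `n` for `φ^m` are sub-samples of orbit segments of length `n m` for
`φ`, so `d_n^{φ^m} ≤ d_{nm}^φ`; conversely, uniform continuity of `φ, …, φ^{m-1}` gives for every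
`ε` an `η` with `d_n^{φ^m} < η → d_{nm}^φ < ε`. Hence `G_n^{φ^m}(ε) ≤ G_{nm}^φ(ε) ≤ G_n^{φ^m}(η)`,
and since `log (n m) / log n → 1` the upper and lower indices agree. For `C*` the same ball
inclusions transport coverings, multiplying or dividing the orders by `m`, which changes the
weights by at most the factor `(2m)^s` and so preserves the vanishing of `Δ`.
-/

section DynBall

variable {X : Type*} [MetricSpace X] {φ : X → X} {m n n' : ℕ} {x y : X} {ε : ℝ}

lemma dist_iterate_le_dynDist {k : ℕ} (hk : k < n) :
    dist (φ^[k] x) (φ^[k] y) ≤ dynDist φ n x y :=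
  le_ciSup (f := fun k : Fin n => dist (φ^[(k : ℕ)] x) (φ^[(k : ℕ)] y))
    (finite_range _).bddAbove ⟨k, hk⟩

lemma mem_dynBall_iff (hε : 0 < ε) :
    y ∈ dynBall φ n x ε ↔ ∀ k < n, dist (φ^[k] x) (φ^[k] y) < ε := by
  refine ⟨fun h k hk => (dist_iterate_le_dynDist hk).trans_lt h, fun h => ?_⟩
  rcases isEmpty_or_nonempty (Fin n) with hn | hn
  · simpa [dynBall, dynDist, Real.iSup_of_isEmpty] using hε
  · obtain ⟨k, hk⟩ := Finite.exists_max fun k : Fin n => dist (φ^[(k : ℕ)] x) (φ^[(k : ℕ)] y)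
    exact (ciSup_le hk).trans_lt (h k k.2)

lemma dynBall_antitone (hε : 0 < ε) (h : n ≤ n') : dynBall φ n' x ε ⊆ dynBall φ n x ε := by
  intro y hy
  rw [mem_dynBall_iff hε] at hy ⊢
  exact fun k hk => hy k (hk.trans_le h)

lemma dynBall_mul_subset_iterate (hm : 0 < m) (hε : 0 < ε) :
    dynBall φ (n * m) x ε ⊆ dynBall (φ^[m]) n x ε := by
  intro y hy
  rw [mem_dynBall_iff hε] at hy ⊢
  intro k hk
  rw [← Function.iterate_mul]
  exact hy _ (by rw [mul_comm]; exact Nat.mul_lt_mul_of_pos_right hk hm)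

lemma dynBall_mem_nhds (hφ : Continuous φ) (hε : 0 < ε) : dynBall φ n x ε ∈ 𝓝 x := by
  have hclose : ∀ᶠ y in 𝓝 x, ∀ k ∈ Iio n, dist (φ^[k] x) (φ^[k] y) < ε :=
    (eventually_all_finite (finite_Iio n)).2 fun k _ =>
      ((hφ.iterate k).continuousAt.eventually (ball_mem_nhds _ hε)).mono fun y hy => by
        rwa [dist_comm]
  filter_upwards [hclose] with y hy
  exact (mem_dynBall_iff hε).2 fun k hk => hy k hk

lemma exists_dynBall_iterate_subset [CompactSpace X] (hφ : Continuous φ) (hε : 0 < ε) (m : ℕ) :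
    ∃ η > 0, ∀ n x, dynBall (φ^[m]) n x η ⊆ dynBall φ (n * m) x ε := by
  have hunif : UniformContinuous fun x : X => fun j : Fin m => φ^[(j : ℕ)] x :=
    CompactSpace.uniformContinuous_of_continuous (continuous_pi fun j => hφ.iterate j)
  obtain ⟨η, hη, hclose⟩ := Metric.uniformContinuous_iff.1 hunif ε hε
  refine ⟨η, hη, fun n x y hy => (mem_dynBall_iff hε).2 fun k hk => ?_⟩
  rw [mem_dynBall_iff hη] at hy
  have hm : 0 < m := Nat.pos_of_ne_zero (by rintro rfl; simp at hk)
  have hsplit : φ^[k] = φ^[k % m] ∘ (φ^[m])^[k / m] := by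
    rw [← Function.iterate_mul, ← Function.iterate_add, Nat.mod_add_div]
  rw [hsplit]
  exact (dist_le_pi_dist _ _ ⟨k % m, Nat.mod_lt _ hm⟩).trans_lt
    (hclose (hy _ ((Nat.div_lt_iff_lt_mul hm).2 hk)))

end DynBall

section CoverNum

variable {X : Type*} [MetricSpace X] {φ ψ : X → X} {n n' : ℕ} {ε ε' : ℝ}

lemma coverNum_le_card {Y : Set X} {t : Finset X} (h : Y ⊆ ⋃ x ∈ t, dynBall φ n x ε) :
    coverNum φ n Y ε ≤ t.card :=
  Nat.sInf_le ⟨t, rfl, h⟩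

lemma exists_card_eq_coverNum [CompactSpace X] (hφ : Continuous φ) (hε : 0 < ε) (n : ℕ) :
    ∃ t : Finset X, t.card = coverNum φ n univ ε ∧ univ ⊆ ⋃ x ∈ t, dynBall φ n x ε := by
  obtain ⟨t, -, ht⟩ := isCompact_univ.elim_nhds_subcover (fun x => dynBall φ n x ε)
    fun _ _ => dynBall_mem_nhds hφ hε
  exact Nat.sInf_mem (s := {k | ∃ t : Finset X, t.card = k ∧ univ ⊆ ⋃ x ∈ t, dynBall φ n x ε})
    ⟨t.card, t, rfl, ht⟩

lemma coverNum_le_of_dynBall_subset [CompactSpace X] (hψ : Continuous ψ) (hε' : 0 < ε')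
    (h : ∀ x, dynBall ψ n' x ε' ⊆ dynBall φ n x ε) :
    coverNum φ n univ ε ≤ coverNum ψ n' univ ε' := by
  obtain ⟨t, ht, hcover⟩ := exists_card_eq_coverNum hψ hε' n'
  exact ht ▸ coverNum_le_card (hcover.trans (iUnion₂_mono fun x _ => h x))

end CoverNum

noncomputable def logRatio (G : ℕ → ℕ) (n : ℕ) : ℝ≥0∞ :=
  ENNReal.ofReal (Real.log (G n) / Real.log n)

lemma logRatio_le_of_log_le {G H : ℕ → ℕ} {a b : ℕ} {δ : ℝ} (hδ : 0 ≤ δ) (ha : 2 ≤ a)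
    (hb : 2 ≤ b) (hGH : G a ≤ H b) (hlog : Real.log b ≤ (1 + δ) * Real.log a) :
    logRatio G a ≤ ENNReal.ofReal (1 + δ) * logRatio H b := by
  have hla : 0 < Real.log a := Real.log_pos (by exact_mod_cast ha)
  have hlb : 0 < Real.log b := Real.log_pos (by exact_mod_cast hb)
  have hH : 0 ≤ Real.log (H b) := Real.log_natCast_nonneg _
  have hlogGH : Real.log (G a) ≤ Real.log (H b) := by
    rcases (G a).eq_zero_or_pos with h | h
    · simpa [h] using hH
    · exact Real.log_le_log (by exact_mod_cast h) (by exact_mod_cast hGH)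
  rw [logRatio, logRatio, ← ENNReal.ofReal_mul (by linarith)]
  refine ENNReal.ofReal_le_ofReal ?_
  calc Real.log (G a) / Real.log a ≤ Real.log (H b) / Real.log a := by gcongr
    _ ≤ (1 + δ) * (Real.log (H b) / Real.log b) := by
      rw [mul_div_assoc', div_le_div_iff₀ hla hlb]
      nlinarith [mul_le_mul_of_nonneg_left hlog hH]

lemma eventually_logRatio_le {α : Type*} {l : Filter α} {G H : ℕ → ℕ} {a b : α → ℕ} {C : ℕ}
    (ha : Tendsto a l atTop) (hb : Tendsto b l atTop) (hba : ∀ᶠ i in l, b i ≤ C * a i)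
    (hGH : ∀ᶠ i in l, G (a i) ≤ H (b i)) {δ : ℝ} (hδ : 0 < δ) :
    ∀ᶠ i in l, logRatio G (a i) ≤ ENNReal.ofReal (1 + δ) * logRatio H (b i) := by
  have hlogC : ∀ᶠ i in l, Real.log C ≤ δ * Real.log (a i) :=
    (((Real.tendsto_log_atTop.comp tendsto_natCast_atTop_atTop).comp ha).const_mul_atTop
      hδ).eventually_ge_atTop _
  filter_upwards [ha.eventually_ge_atTop 2, hb.eventually_ge_atTop 2, hba, hGH, hlogC]
    with i ha2 hb2 hba hGH hlogC
  refine logRatio_le_of_log_le hδ.le ha2 hb2 hGH ?_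
  have hC : C ≠ 0 := by rintro rfl; omega
  calc Real.log (b i) ≤ Real.log (C * a i) :=
        Real.log_le_log (by exact_mod_cast (by omega : 0 < b i)) (by exact_mod_cast hba)
    _ = Real.log C + Real.log (a i) :=
        Real.log_mul (by exact_mod_cast hC) (by exact_mod_cast (by omega : a i ≠ 0))
    _ ≤ (1 + δ) * Real.log (a i) := by linarith

lemma ENNReal.le_of_forall_pos_le_ofReal_one_add_mul {a b : ℝ≥0∞}
    (h : ∀ δ : ℝ, 0 < δ → a ≤ ENNReal.ofReal (1 + δ) * b) : a ≤ b := by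
  rcases eq_or_ne b ⊤ with rfl | hb
  · exact le_top
  have hfactor : Tendsto (fun δ : ℝ => ENNReal.ofReal (1 + δ)) (𝓝[>] 0) (𝓝 1) := by
    have h1 : Tendsto (fun δ : ℝ => 1 + δ) (𝓝[>] 0) (𝓝 1) :=
      ((continuous_const.add continuous_id).tendsto' (0 : ℝ) 1 (by simp)).mono_left
        nhdsWithin_le_nhds
    simpa using ENNReal.tendsto_ofReal h1
  have hlim : Tendsto (fun δ : ℝ => ENNReal.ofReal (1 + δ) * b) (𝓝[>] 0) (𝓝 b) := by
    simpa using ENNReal.Tendsto.mul_const hfactor (Or.inr hb)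
  exact ge_of_tendsto hlim (eventually_nhdsWithin_of_forall h)

lemma limsup_logRatio_le {G H g : ℕ → ℕ} {C : ℕ} (hg : Tendsto g atTop atTop)
    (hgC : ∀ᶠ n in atTop, g n ≤ C * n) (hGH : ∀ᶠ n in atTop, G n ≤ H (g n)) :
    limsup (logRatio G) atTop ≤ limsup (logRatio H) atTop := by
  refine ENNReal.le_of_forall_pos_le_ofReal_one_add_mul fun δ hδ => ?_
  calc limsup (logRatio G) atTop
      ≤ limsup (fun n => ENNReal.ofReal (1 + δ) * logRatio H (g n)) atTop :=
        limsup_le_limsup (eventually_logRatio_le tendsto_id hg hgC hGH hδ)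
    _ = ENNReal.ofReal (1 + δ) * limsup (logRatio H ∘ g) atTop :=
        ENNReal.limsup_const_mul_of_ne_top ENNReal.ofReal_ne_top
    _ ≤ ENNReal.ofReal (1 + δ) * limsup (logRatio H) atTop := by
        gcongr
        exact hg.limsup_comp_le_limsup

lemma liminf_logRatio_le {G H h : ℕ → ℕ} {C : ℕ} (hh : Tendsto h atTop atTop)
    (hhC : ∀ᶠ n in atTop, n ≤ C * h n) (hGH : ∀ᶠ n in atTop, G (h n) ≤ H n) :
    liminf (logRatio G) atTop ≤ liminf (logRatio H) atTop := by
  refine ENNReal.le_of_forall_pos_le_ofReal_one_add_mul fun δ hδ => ?_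
  calc liminf (logRatio G) atTop ≤ liminf (logRatio G ∘ h) atTop := hh.liminf_le_liminf_comp
    _ ≤ liminf (fun n => ENNReal.ofReal (1 + δ) * logRatio H n) atTop :=
        liminf_le_liminf (eventually_logRatio_le hh tendsto_id hhC hGH hδ)
    _ = ENNReal.ofReal (1 + δ) * liminf (logRatio H) atTop :=
        ENNReal.liminf_const_mul_of_ne_top ENNReal.ofReal_ne_top

lemma le_div_mul_two_mul {k m : ℕ} (hm : 0 < m) (hmk : m ≤ k) : k ≤ k / m * (2 * m) := by
  have hlt := Nat.lt_div_mul_add (a := k) hm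
  have hge : m ≤ k / m * m := Nat.le_mul_of_pos_left m ((Nat.le_div_iff_mul_le hm).2 (by simpa))
  nlinarith

section Complexity

variable {X : Type*} [MetricSpace X] [CompactSpace X] {φ : X → X} {m : ℕ}

lemma upperComplexity_iterate (hφ : Continuous φ) (hm : 0 < m) :
    upperComplexity (φ^[m]) univ = upperComplexity φ univ := by
  refine le_antisymm (iSup₂_mono' fun ε hε => ⟨ε, hε, ?_⟩) (iSup₂_mono' fun ε hε => ?_)
  · refine limsup_logRatio_le (g := (· * m)) (C := m) (tendsto_id.atTop_mul_const' hm)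
      (.of_forall fun n => (mul_comm n m).le) (.of_forall fun n => ?_)
    exact coverNum_le_of_dynBall_subset hφ hε fun x => dynBall_mul_subset_iterate hm hε
  · obtain ⟨η, hη, hball⟩ := exists_dynBall_iterate_subset hφ hε m
    refine ⟨η, hη, limsup_logRatio_le (g := fun k => k / m + 1) (C := 2)
      (tendsto_atTop_mono (fun k => (k / m).le_succ) (Nat.tendsto_div_const_atTop hm.ne')) ?_
      (.of_forall fun k => ?_)⟩
    · filter_upwards [eventually_ge_atTop 1] with k hk
      have := Nat.div_le_self k m
      omega
    · have hk : k ≤ (k / m + 1) * m := by rw [add_one_mul]; exact (Nat.lt_div_mul_add hm).le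
      exact (coverNum_le_of_dynBall_subset hφ hε fun x => dynBall_antitone hε hk).trans
        (coverNum_le_of_dynBall_subset (hφ.iterate m) hη fun x => hball _ x)

lemma lowerComplexity_iterate (hφ : Continuous φ) (hm : 0 < m) :
    lowerComplexity (φ^[m]) univ = lowerComplexity φ univ := by
  refine le_antisymm (iSup₂_mono' fun ε hε => ⟨ε, hε, ?_⟩) (iSup₂_mono' fun ε hε => ?_)
  · refine liminf_logRatio_le (h := (· / m)) (C := 2 * m) (Nat.tendsto_div_const_atTop hm.ne')
      ?_ (.of_forall fun k => ?_)
    · filter_upwards [eventually_ge_atTop m] with k hk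
      exact (le_div_mul_two_mul hm hk).trans_eq (mul_comm _ _)
    · exact (coverNum_le_of_dynBall_subset hφ hε fun x => dynBall_mul_subset_iterate hm hε).trans
        (coverNum_le_of_dynBall_subset hφ hε fun x => dynBall_antitone hε (Nat.div_mul_le_self k m))
  · obtain ⟨η, hη, hball⟩ := exists_dynBall_iterate_subset hφ hε m
    exact ⟨η, hη, liminf_logRatio_le (h := (· * m)) (C := 1) (tendsto_id.atTop_mul_const' hm)
      (.of_forall fun n => by simpa using Nat.le_mul_of_pos_right n hm)
      (.of_forall fun n => coverNum_le_of_dynBall_subset (hφ.iterate m) hη fun x => hball n x)⟩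

end Complexity

section WeakComplexity

variable {X : Type*} [MetricSpace X] {φ ψ : X → X} {Y : Set X} {ε ε' s : ℝ} {m N N' : ℕ}

lemma dynDelta_le_coverWeight {S : Set (X × ℕ)} (h : IsDynCover φ Y ε N S) :
    dynDelta φ Y ε s N ≤ coverWeight s S :=
  iInf₂_le S h

lemma IsDynCover.image {S : Set (X × ℕ)} (hS : IsDynCover φ Y ε N S) (f : X × ℕ → X × ℕ)
    (horder : ∀ p ∈ S, N' ≤ (f p).2)
    (hball : ∀ p ∈ S, dynBall φ p.2 p.1 ε ⊆ dynBall ψ (f p).2 (f p).1 ε') :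
    IsDynCover ψ Y ε' N' (f '' S) := by
  obtain ⟨hcount, -, hcover⟩ := hS
  refine ⟨hcount.image f, forall_mem_image.2 horder, hcover.trans ?_⟩
  exact iUnion₂_subset fun p hp =>
    (hball p hp).trans (subset_biUnion_of_mem (u := fun q : X × ℕ => dynBall ψ q.2 q.1 ε')
      (mem_image_of_mem f hp))

lemma coverWeight_image_le (f : X × ℕ → X × ℕ) (S : Set (X × ℕ)) :
    coverWeight s (f '' S) ≤ ∑' p : S, ((f p).2 : ℝ≥0∞)⁻¹ ^ s :=
  ENNReal.tsum_le_tsum_comp_of_surjective imageFactorization_surjective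
    fun q : f '' S => ((q : X × ℕ).2 : ℝ≥0∞)⁻¹ ^ s

lemma coverWeight_image_mul_le (hm : 0 < m) (hs : 0 ≤ s) (S : Set (X × ℕ)) :
    coverWeight s ((fun p : X × ℕ => (p.1, p.2 * m)) '' S) ≤ coverWeight s S :=
  (coverWeight_image_le _ S).trans <| ENNReal.tsum_le_tsum fun p =>
    ENNReal.rpow_le_rpow (ENNReal.inv_le_inv.2 (by exact_mod_cast Nat.le_mul_of_pos_right _ hm)) hs

lemma coverWeight_image_div_le (hm : 0 < m) (hs : 0 ≤ s) {S : Set (X × ℕ)}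
    (horder : ∀ p ∈ S, m ≤ p.2) :
    coverWeight s ((fun p : X × ℕ => (p.1, p.2 / m)) '' S) ≤
      ((2 * m : ℕ) : ℝ≥0∞) ^ s * coverWeight s S := by
  refine (coverWeight_image_le _ S).trans ?_
  rw [coverWeight, ← ENNReal.tsum_mul_left]
  refine ENNReal.tsum_le_tsum fun p => ?_
  rw [← ENNReal.mul_rpow_of_nonneg _ _ hs]
  refine ENNReal.rpow_le_rpow ?_ hs
  have hmp := horder p p.2
  calc (((p : X × ℕ).2 / m : ℕ) : ℝ≥0∞)⁻¹ ≤ (((p : X × ℕ).2 : ℝ≥0∞) / (2 * m : ℕ))⁻¹ :=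
        ENNReal.inv_le_inv.2 <|
          ENNReal.div_le_of_le_mul (by exact_mod_cast le_div_mul_two_mul hm hmp)
    _ = ((2 * m : ℕ) : ℝ≥0∞) * ((p : X × ℕ).2 : ℝ≥0∞)⁻¹ := by
        rw [ENNReal.inv_div (Or.inl (ENNReal.natCast_ne_top _)) (Or.inr (by simp; omega)),
          div_eq_mul_inv]

lemma dynDelta_iterate_le (hm : 0 < m) (hN : 0 < N) (hs : 0 ≤ s) (hε : 0 < ε) :
    dynDelta (φ^[m]) Y ε s N ≤ ((2 * m : ℕ) : ℝ≥0∞) ^ s * dynDelta φ Y ε s (N * m) := by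
  have hK0 : ((2 * m : ℕ) : ℝ≥0∞) ^ s ≠ 0 :=
    (ENNReal.rpow_pos (by exact_mod_cast (by omega : 0 < 2 * m)) (ENNReal.natCast_ne_top _)).ne'
  have hKtop : ((2 * m : ℕ) : ℝ≥0∞) ^ s ≠ ⊤ :=
    ENNReal.rpow_ne_top_of_nonneg hs (ENNReal.natCast_ne_top _)
  simp_rw [dynDelta, ENNReal.mul_iInf_of_ne hK0 hKtop]
  refine le_iInf₂ fun S hS => ?_
  have horder : ∀ p ∈ S, N * m ≤ p.2 := hS.2.1
  have hcover : IsDynCover (φ^[m]) Y ε N ((fun p : X × ℕ => (p.1, p.2 / m)) '' S) :=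
    hS.image _ (fun p hp => (Nat.le_div_iff_mul_le hm).2 (horder p hp)) fun p _ =>
      (dynBall_antitone hε (Nat.div_mul_le_self _ _)).trans (dynBall_mul_subset_iterate hm hε)
  exact (dynDelta_le_coverWeight hcover).trans (coverWeight_image_div_le hm hs fun p hp =>
    (Nat.le_mul_of_pos_left m hN).trans (horder p hp))

lemma dynDelta_le_dynDelta_iterate (hm : 0 < m) (hs : 0 ≤ s)
    (hball : ∀ n x, dynBall (φ^[m]) n x ε' ⊆ dynBall φ (n * m) x ε) :
    dynDelta φ Y ε s N ≤ dynDelta (φ^[m]) Y ε' s N :=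
  le_iInf₂ fun S hS =>
    (dynDelta_le_coverWeight (hS.image _ (fun p hp => (hS.2.1 p hp).trans
      (Nat.le_mul_of_pos_right _ hm)) fun p _ => hball p.2 p.1)).trans
    (coverWeight_image_mul_le hm hs S)

lemma dynDeltaSup_iterate_le (hm : 0 < m) (hs : 0 ≤ s) (hε : 0 < ε) :
    dynDeltaSup (φ^[m]) Y ε s ≤ ((2 * m : ℕ) : ℝ≥0∞) ^ s * dynDeltaSup φ Y ε s :=
  iSup₂_le fun N hN => (dynDelta_iterate_le hm hN hs hε).trans <| by
    gcongr
    exact le_iSup₂ (f := fun N (_ : 1 ≤ N) => dynDelta φ Y ε s N) (N * m)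
      (hN.trans (Nat.le_mul_of_pos_right N hm))

lemma dynDeltaSup_le_dynDeltaSup_iterate (hm : 0 < m) (hs : 0 ≤ s)
    (hball : ∀ n x, dynBall (φ^[m]) n x ε' ⊆ dynBall φ (n * m) x ε) :
    dynDeltaSup φ Y ε s ≤ dynDeltaSup (φ^[m]) Y ε' s :=
  iSup₂_mono fun _ _ => dynDelta_le_dynDelta_iterate hm hs hball

lemma critVal_le_critVal (h : ∀ s, 0 ≤ s → dynDeltaSup φ Y ε s = 0 → dynDeltaSup ψ Y ε' s = 0) :
    critVal ψ Y ε' ≤ critVal φ Y ε :=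
  sInf_le_sInf fun _ ⟨s, hs, hc, hΔ⟩ => ⟨s, hs, hc, h s hs hΔ⟩

lemma weakComplexity_iterate [CompactSpace X] (hφ : Continuous φ) (hm : 0 < m) :
    weakComplexity (φ^[m]) univ = weakComplexity φ univ := by
  refine le_antisymm (iSup₂_mono' fun ε hε => ⟨ε, hε, critVal_le_critVal fun s hs hΔ => ?_⟩)
    (iSup₂_mono' fun ε hε => ?_)
  · exact le_zero_iff.1 ((dynDeltaSup_iterate_le hm hs hε).trans_eq (by rw [hΔ, mul_zero]))
  · obtain ⟨η, hη, hball⟩ := exists_dynBall_iterate_subset hφ hε m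
    exact ⟨η, hη, critVal_le_critVal fun s hs hΔ =>
      le_zero_iff.1 (hΔ ▸ dynDeltaSup_le_dynDeltaSup_iterate hm hs hball)⟩

end WeakComplexity

/-- for every `m ≥ 1`, `C(φ^m) = C(φ)`, `C̲(φ^m) = C̲(φ)` and `C*(φ^m) = C*(φ)`. -/
theorem complexity_iterate {X : Type*} [MetricSpace X] [CompactSpace X]
    (φ : X → X) (hφ : Continuous φ) (m : ℕ) (hm : 1 ≤ m) :
    upperComplexity (φ^[m]) Set.univ = upperComplexity φ Set.univ ∧
    lowerComplexity (φ^[m]) Set.univ = lowerComplexity φ Set.univ ∧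
    weakComplexity (φ^[m]) Set.univ = weakComplexity φ Set.univ :=
  ⟨upperComplexity_iterate hφ hm, lowerComplexity_iterate hφ hm, weakComplexity_iterate hφ hm⟩
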